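/- arXiv:2008.02433 — 4 statements merged into one kernel-verified Lean document; each statement's English description precedes it below -/
import Mathlib

section
/- Let G be a finite group and N a non-trivial normal subgroup. Then (G, N) is a Camina pair (i.e., every x ∈ G − N is conjugate to xy for all y ∈ N) if and only if for every x ∈ G − N, |C_G(x)| = |C_{G/N}(xN)|. -/
open CategoryTheory

/-- The kernel of the irreducible character of `V` (the kernel of the representation). -/
noncomputable def FDRep.charKer {G : Type} [Group G] (V : FDRep ℂ G) : Subgroup G :=
  MonoidHom.ker (Representation.asGroupHom V.ρ)

/-- The co-degree `cod(χ) = |G : ker χ| / χ(1)` of the character of `V`. -/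
noncomputable def FDRep.cod {G : Type} [Group G] (V : FDRep ℂ G) : ℕ :=
  V.charKer.index / Module.finrank ℂ V

/-- `G` is a `D'₀`-group: distinct irreducible characters of `G` have distinct co-degrees,
i.e. the co-degree map is injective on `Irr(G)`. -/
def codInjective (G : Type) [Group G] : Prop :=
  ∀ V W : FDRep ℂ G, Simple V → Simple W → V.cod = W.cod → V.character = W.character

/-- `G` is a Frobenius group with kernel `N`. -/
def IsFrobeniusWithKernel (G : Type) [Group G] (N : Subgroup G) : Prop :=
  N.Normal ∧ N ≠ ⊥ ∧ N ≠ ⊤ ∧ ∀ x ∈ N, x ≠ 1 → Subgroup.centralizer {x} ≤ N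

/-!
Conjugation commutes with the projection to `G ⧸ N`, so the class of `x` lies in the preimage of
the class of `xN`, and the Camina condition at `x` says exactly that the two sets coincide. By the
orbit–stabilizer theorem in `G` and in `G ⧸ N`, the class of `x` has size `|G| / |C_G(x)|` and the
preimage has size `|N| · |G/N| / |C_{G/N}(xN)| = |G| / |C_{G/N}(xN)|`; so the inclusion is an
equality exactly when the two centralizers have the same order.
-/

open QuotientGroup Subgroup

section

variable {G : Type*} [Group G]

theorem Subgroup.index_centralizer_singleton (x : G) :
    (centralizer {x}).index = Nat.card (conjugatesOf x) := by
  have horbit : MulAction.orbit (ConjAct G) x = conjugatesOf x := by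
    ext g
    rw [ConjAct.mem_orbit_conjAct, isConj_comm]
    rfl
  rw [centralizer_eq_comap_stabilizer, ← horbit, Nat.card_coe_set_eq,
    ← MulAction.index_stabilizer]
  exact index_comap_of_surjective _ ConjAct.toConjAct.surjective

theorem card_conjugatesOf_mul_card_centralizer (x : G) :
    Nat.card (conjugatesOf x) * Nat.card (centralizer {x}) = Nat.card G := by
  rw [← index_centralizer_singleton, mul_comm, card_mul_index]

variable (N : Subgroup G) [N.Normal]

theorem card_preimage_conjugatesOf_mk_mul_card_centralizer (x : G) :
    Nat.card (mk ⁻¹' conjugatesOf (x : G ⧸ N)) * Nat.card (centralizer {(x : G ⧸ N)}) =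
      Nat.card G := by
  rw [card_preimage_mk, mul_assoc, card_conjugatesOf_mul_card_centralizer, mul_comm,
    ← card_eq_card_quotient_mul_card_subgroup]

theorem conjugatesOf_subset_preimage_conjugatesOf_mk (x : G) :
    conjugatesOf x ⊆ mk ⁻¹' conjugatesOf (x : G ⧸ N) :=
  fun _ hg => (QuotientGroup.mk' N).map_isConj hg

theorem conjugatesOf_eq_preimage_iff_forall_isConj_mul (x : G) :
    conjugatesOf x = mk ⁻¹' conjugatesOf (x : G ⧸ N) ↔ ∀ y ∈ N, IsConj x (x * y) := by
  constructor
  · intro hclass y hy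
    change x * y ∈ conjugatesOf x
    rw [hclass, Set.mem_preimage, mk_mul, (eq_one_iff y).mpr hy, mul_one]
    exact mem_conjugatesOf_self
  · intro hcamina
    refine (conjugatesOf_subset_preimage_conjugatesOf_mk N x).antisymm fun g hg => ?_
    obtain ⟨c, hc⟩ := isConj_iff.mp (hg : IsConj (x : G ⧸ N) g)
    obtain ⟨h, rfl⟩ := mk_surjective c
    -- `g = h x h⁻¹ n` with `n ∈ N`, so `h⁻¹ g h = x (h⁻¹ n h)` with `h⁻¹ n h ∈ N`.
    have hn : (h * x * h⁻¹)⁻¹ * g ∈ N := QuotientGroup.eq.mp hc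
    have hm : h⁻¹ * ((h * x * h⁻¹)⁻¹ * g) * h ∈ N := by
      simpa using ‹N.Normal›.conj_mem _ hn h⁻¹
    have hconj : IsConj x (h⁻¹ * g * h) := by
      simpa [mul_assoc] using hcamina _ hm
    exact hconj.trans (isConj_iff.mpr ⟨h, by group⟩)

theorem forall_isConj_mul_iff_card_centralizer_eq [Finite G] (x : G) :
    (∀ y ∈ N, IsConj x (x * y)) ↔
      Nat.card (centralizer {x}) = Nat.card (centralizer {(x : G ⧸ N)}) := by
  have hcard := (card_conjugatesOf_mul_card_centralizer x).trans
    (card_preimage_conjugatesOf_mk_mul_card_centralizer N x).symm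
  have hsub := conjugatesOf_subset_preimage_conjugatesOf_mk N x
  have hpos : 0 < Nat.card (conjugatesOf x) :=
    Nat.card_pos_iff.mpr ⟨⟨x, mem_conjugatesOf_self⟩, Set.toFinite _⟩
  rw [← conjugatesOf_eq_preimage_iff_forall_isConj_mul]
  calc conjugatesOf x = mk ⁻¹' conjugatesOf (x : G ⧸ N)
      ↔ Nat.card (conjugatesOf x) = Nat.card (mk ⁻¹' conjugatesOf (x : G ⧸ N)) := by
        refine ⟨fun h => h ▸ rfl, fun h => Set.eq_of_subset_of_ncard_le hsub ?_ (Set.toFinite _)⟩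
        rw [← Nat.card_coe_set_eq, ← Nat.card_coe_set_eq, h]
    _ ↔ Nat.card (centralizer {x}) = Nat.card (centralizer {(x : G ⧸ N)}) := by
        constructor
        · intro h
          exact Nat.eq_of_mul_eq_mul_left hpos (h ▸ hcard)
        · intro h
          rw [h] at hcard
          exact Nat.eq_of_mul_eq_mul_right Nat.card_pos hcard
end

theorem camina_pair_iff_centralizer_card_general {G : Type} [Group G] [Fintype G]
    (N : Subgroup G) [N.Normal] :
    (∀ x ∉ N, ∀ y ∈ N, IsConj x (x * y)) ↔
      ∀ x ∉ N, Nat.card (Subgroup.centralizer ({x} : Set G)) =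
        Nat.card (Subgroup.centralizer ({(x : G ⧸ N)} : Set (G ⧸ N))) :=
  forall_congr' fun x => forall_congr' fun _ => forall_isConj_mul_iff_card_centralizer_eq N x

theorem camina_pair_iff_centralizer_card {G : Type} [Group G] [Fintype G]
    (N : Subgroup G) [N.Normal] (hN : N ≠ ⊥) :
    (∀ x ∉ N, ∀ y ∈ N, IsConj x (x * y)) ↔
      ∀ x ∉ N, Nat.card (Subgroup.centralizer ({x} : Set G)) =
        Nat.card (Subgroup.centralizer ({(x : G ⧸ N)} : Set (G ⧸ N))) :=
  camina_pair_iff_centralizer_card_general N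
end

section
/- Let p be a prime and G a non-trivial finite p-group such that distinct irreducible characters of G have distinct co-degrees. Then G is cyclic of order 2. -/
/-!
A linear character `λ : G →* ℂˣ` is an irreducible character with `cod λ = |G : ker λ|`, and
`λ⁻¹` has the same kernel, so injectivity of the co-degree forces `λ = λ⁻¹`. Hence every linear
character takes values in `{±1}`, any two non-trivial ones have kernels of index `2` and coincide,
and `|G/G'| = |Hom(G, ℂˣ)| ≤ 2`. A nilpotent group with cyclic abelianization is cyclic (induct on
`G/Z(G)`: if `G/Z(G)` is cyclic then `G` is abelian), so `G` is cyclic with `|G| = |G/G'| = 2`.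
-/

open CategoryTheory

theorem Abelianization.map_surjective {G H : Type*} [Group G] [Group H] {f : G →* H}
    (hf : Function.Surjective f) : Function.Surjective (map f) := by
  intro y
  induction y using QuotientGroup.induction_on with
  | H y =>
    obtain ⟨x, rfl⟩ := hf y
    exact ⟨of x, map_of f x⟩

theorem isCyclic_of_isCyclic_abelianization (G : Type*) [Group G] [Group.IsNilpotent G]
    [IsCyclic (Abelianization G)] : IsCyclic G := by
  refine Group.nilpotent_center_quotient_ind
    (P := fun G _ _ => IsCyclic (Abelianization G) → IsCyclic G) G
    (fun G _ _ _ => inferInstance) (fun G _ _ ih hab => ?_) ‹_›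
  have : IsCyclic (G ⧸ Subgroup.center G) :=
    ih (isCyclic_of_surjective _ (Abelianization.map_surjective (QuotientGroup.mk'_surjective _)))
  have : IsMulCommutative G :=
    (QuotientGroup.mk' (Subgroup.center G)).isMulCommutative_of_isCyclic_of_ker_le_center
      (QuotientGroup.ker_mk' _).le
  let : CommGroup G := { mul_comm := mul_comm' }
  exact isCyclic_of_surjective _ Abelianization.equivOfComm.symm.surjective

theorem Abelianization.card_eq_card_monoidHom_units (G : Type*) [Group G] [Finite G] :
    Nat.card (Abelianization G) = Nat.card (G →* ℂˣ) := by
  rw [Nat.card_congr (Abelianization.lift (G := G) (A := ℂˣ)),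
    CommGroup.card_monoidHom_of_hasEnoughRootsOfUnity]

theorem MonoidHom.index_ker_le_two_of_sq_eq_one {G M : Type*} [Group G] [CommRing M] [IsDomain M]
    (l : G →* Mˣ) (hl : ∀ g, l g ^ 2 = 1) : l.ker.index ≤ 2 := by
  rw [Subgroup.index_ker]
  calc Nat.card l.range ≤ Nat.card (rootsOfUnity 2 M) :=
        Subgroup.card_le_of_le (by rintro _ ⟨g, rfl⟩; exact (mem_rootsOfUnity 2 _).mpr (hl g))
    _ ≤ 2 := card_rootsOfUnity M 2

theorem MonoidHom.ker_inv {G A : Type*} [Group G] [CommGroup A] (l : G →* A) :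
    (l⁻¹).ker = l.ker := by
  ext g
  simp

namespace FDRep

section Field

variable {k G : Type} [Field k] [Monoid G]

noncomputable def ofLinearChar (l : G →* kˣ) : FDRep k G :=
  FDRep.of ((algebraMap k (Module.End k k) : k →* Module.End k k).comp ((Units.coeHom k).comp l))

lemma ofLinearChar_ρ (l : G →* kˣ) (g : G) :
    (ofLinearChar l).ρ g = algebraMap k (Module.End k k) (l g) := rfl

lemma finrank_ofLinearChar (l : G →* kˣ) : Module.finrank k (ofLinearChar l) = 1 :=
  Module.finrank_self k

lemma ofLinearChar_character (l : G →* kˣ) (g : G) : (ofLinearChar l).character g = l g := by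
  change LinearMap.trace k k (algebraMap k (Module.End k k) (l g)) = l g
  simp [Algebra.algebraMap_eq_smul_one]

end Field

variable {G : Type} [Group G]

lemma charKer_ofLinearChar (l : G →* ℂˣ) : (ofLinearChar l).charKer = l.ker := by
  ext g
  simp only [charKer, MonoidHom.mem_ker, Units.ext_iff, Representation.asGroupHom_apply,
    ofLinearChar_ρ, Units.val_one]
  change algebraMap ℂ (Module.End ℂ ℂ) (l g) = 1 ↔ _
  rw [map_eq_one_iff _ (algebraMap ℂ (Module.End ℂ ℂ)).injective]

lemma cod_ofLinearChar (l : G →* ℂˣ) : (ofLinearChar l).cod = l.ker.index := by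
  rw [cod, charKer_ofLinearChar, finrank_ofLinearChar, Nat.div_one]

lemma simple_ofLinearChar [Fintype G] (l : G →* ℂˣ) : Simple (ofLinearChar l) := by
  rw [simple_iff_char_is_norm_one]
  simp [ofLinearChar_character]

end FDRep

namespace codInjective

open FDRep

variable {G : Type} [Group G] [Fintype G]

theorem eq_of_index_ker_eq (h : codInjective G) {l m : G →* ℂˣ}
    (hlm : l.ker.index = m.ker.index) : l = m := by
  have hcod : (ofLinearChar l).cod = (ofLinearChar m).cod := by
    rw [cod_ofLinearChar, cod_ofLinearChar, hlm]
  ext g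
  simpa [ofLinearChar_character] using
    congrFun (h _ _ (simple_ofLinearChar l) (simple_ofLinearChar m) hcod) g

theorem apply_sq_eq_one (h : codInjective G) (l : G →* ℂˣ) (g : G) : l g ^ 2 = 1 := by
  have hinv : (l g)⁻¹ = l g :=
    DFunLike.congr_fun (h.eq_of_index_ker_eq (l := l⁻¹) (m := l) (by rw [MonoidHom.ker_inv])) g
  rw [sq, mul_eq_one_iff_eq_inv, hinv]

theorem index_ker_eq_two (h : codInjective G) {l : G →* ℂˣ} (hl : l ≠ 1) : l.ker.index = 2 := by
  have hle := l.index_ker_le_two_of_sq_eq_one (h.apply_sq_eq_one l)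
  have hne_one : l.ker.index ≠ 1 := by
    rwa [Ne, Subgroup.index_eq_one, MonoidHom.ker_eq_top_iff]
  have hne_zero : l.ker.index ≠ 0 := Subgroup.index_ne_zero_of_finite
  omega

theorem card_monoidHom_le_two (h : codInjective G) : Nat.card (G →* ℂˣ) ≤ 2 := by
  classical
  have hinj : Function.Injective (fun l : G →* ℂˣ => decide (l = 1)) := by
    intro l m hlm
    by_cases hl : l = 1 <;> by_cases hm : m = 1
    · rw [hl, hm]
    · simp [hl, hm] at hlm
    · simp [hl, hm] at hlm
    · exact h.eq_of_index_ker_eq (by rw [h.index_ker_eq_two hl, h.index_ker_eq_two hm])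
  simpa using Nat.card_le_card_of_injective _ hinj

end codInjective

theorem pGroup_codInjective_card_two {G : Type} [Group G] [Fintype G] [Nontrivial G]
    {p : ℕ} (hp : p.Prime) (hG : IsPGroup p G) (h : codInjective G) :
    Nat.card G = 2 ∧ IsCyclic G := by
  have : Fact p.Prime := ⟨hp⟩
  have : Group.IsNilpotent G := hG.isNilpotent
  have hab : Nat.card (Abelianization G) ≤ 2 :=
    (Abelianization.card_eq_card_monoidHom_units G).trans_le h.card_monoidHom_le_two
  have : IsCyclic (Abelianization G) := by
    have : 0 < Nat.card (Abelianization G) := Nat.card_pos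
    refine isCyclic_of_card_dvd_prime (p := 2) ?_
    interval_cases Nat.card (Abelianization G) <;> norm_num
  have hcyc : IsCyclic G := isCyclic_of_isCyclic_abelianization G
  let : CommGroup G := IsCyclic.commGroup
  have hcard : Nat.card G = Nat.card (Abelianization G) :=
    Nat.card_congr Abelianization.equivOfComm.toEquiv
  have : 1 < Nat.card G := Finite.one_lt_card
  exact ⟨by omega, hcyc⟩
end

section
/- Let G be a rational Frobenius group with Frobenius complement of order 2 and abelian kernel K. Then K is an elementary abelian 3-group and the complement acts on K by inverting every non-identity element. -/
open CategoryTheory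

/-!
A nontrivial element `t` of the complement centralizes no nontrivial element of the Frobenius
kernel `K`, so conjugation by the involution `t` is a fixed-point-free involutive automorphism of
the finite group `K`, hence it is inversion and `K` has odd order. Writing an element of `G` as
`k * t` with `k ∈ K`, `t ∈ H`, abelianness of `K` shows that every conjugate of `x ∈ K` is `x` or
`x⁻¹`. Since `x` has odd order, rationality makes `x` conjugate to `x ^ 2`, so `x ^ 2 = x` or
`x ^ 2 = x⁻¹`; either way `x ^ 3 = 1`.
-/

open MonoidHom

namespace Subgroup

variable {G : Type*} [Group G] {K H : Subgroup G}

theorem fixedPointFree_conjNormal [K.Normal]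
    (hcent : ∀ x ∈ K, x ≠ 1 → centralizer {x} ≤ K) {t : G} (ht : t ∉ K) :
    FixedPointFree (MulAut.conjNormal t : K ≃* K) := by
  intro x hx
  by_contra hx1
  refine ht (hcent x x.2 (by exact_mod_cast hx1) ?_)
  have hx' : t * x * t⁻¹ = x := by rw [← MulAut.conjNormal_apply, hx]
  exact mem_centralizer_singleton_iff.mpr (mul_inv_eq_iff_eq_mul.mp hx')

theorem involutive_conjNormal [K.Normal] {t : G} (ht : t ^ 2 = 1) :
    Function.Involutive (MulAut.conjNormal t : K ≃* K) := by
  intro x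
  rw [← MulAut.mul_apply, ← map_mul, ← sq, ht, map_one, MulAut.one_apply]

theorem conj_eq_inv_of_fixedPointFree_conjNormal [K.Normal] [Finite K]
    (hcent : ∀ x ∈ K, x ≠ 1 → centralizer {x} ≤ K) {t : G} (ht : t ∉ K) (ht2 : t ^ 2 = 1)
    {x : G} (hx : x ∈ K) : t * x * t⁻¹ = x⁻¹ := by
  have hinv := (fixedPointFree_conjNormal hcent ht).coe_eq_inv_of_involutive
    (involutive_conjNormal ht2)
  rw [← MulAut.conjNormal_apply (H := K) t ⟨x, hx⟩, hinv]
  rfl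

theorem odd_orderOf_of_fixedPointFree_conjNormal [K.Normal] [Finite K]
    (hcent : ∀ x ∈ K, x ≠ 1 → centralizer {x} ≤ K) {t : G} (ht : t ∉ K) (ht2 : t ^ 2 = 1)
    {x : G} (hx : x ∈ K) : Odd (orderOf x) := by
  rw [← orderOf_mk x hx]
  exact (fixedPointFree_conjNormal hcent ht).odd_orderOf_of_involutive
    (involutive_conjNormal ht2) _

theorem conj_eq_or_eq_inv_of_isComplement' (hcompl : IsComplement' K H)
    (hKab : ∀ a ∈ K, ∀ b ∈ K, a * b = b * a)
    (hinv : ∀ t ∈ H, t ≠ 1 → ∀ x ∈ K, t * x * t⁻¹ = x⁻¹) {x : G} (hx : x ∈ K) (c : G) :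
    c * x * c⁻¹ = x ∨ c * x * c⁻¹ = x⁻¹ := by
  obtain ⟨⟨⟨k, hk⟩, ⟨t, ht⟩⟩, rfl⟩ := (hcompl.existsUnique c).exists
  have hconj_k : ∀ y ∈ K, k * y * k⁻¹ = y := fun y hy => by
    rw [hKab k hk y hy, mul_inv_cancel_right]
  have hsplit : k * t * x * (k * t)⁻¹ = k * (t * x * t⁻¹) * k⁻¹ := by group
  by_cases ht1 : t = 1
  · left
    rw [hsplit, ht1, one_mul, inv_one, mul_one, hconj_k x hx]
  · right
    rw [hsplit, hinv t ht ht1 x hx, hconj_k _ (inv_mem hx)]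

end Subgroup

theorem pow_three_eq_one_of_isConj_sq {G : Type*} [Group G] {x : G} (hsq : IsConj x (x ^ 2))
    (hconj : ∀ c : G, c * x * c⁻¹ = x ∨ c * x * c⁻¹ = x⁻¹) : x ^ 3 = 1 := by
  obtain ⟨c, hc⟩ := isConj_iff.mp hsq
  rcases hconj c with h | h <;> rw [h] at hc
  · rw [(mul_eq_right.mp (hc.trans (sq x)).symm : x = 1), one_pow]
  · rw [pow_succ, ← hc, inv_mul_cancel]

theorem sq_eq_one_of_mem_of_card_eq_two {G : Type*} [Group G] {H : Subgroup G}
    (hH : Nat.card H = 2) {t : G} (ht : t ∈ H) : t ^ 2 = 1 := by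
  have : (⟨t, ht⟩ : H) ^ 2 = 1 := hH ▸ pow_card_eq_one'
  exact congrArg Subtype.val this

theorem rational_frobenius_complement_two {G : Type} [Group G] [Fintype G]
    (hrat : ∀ (x : G) (k : ℕ), Nat.Coprime k (orderOf x) → IsConj x (x ^ k))
    (K H : Subgroup G) (hfrob : IsFrobeniusWithKernel G K)
    (hcompl : Subgroup.IsComplement' K H) (hH : Nat.card H = 2)
    (hKab : ∀ a ∈ K, ∀ b ∈ K, a * b = b * a) :
    (∀ x ∈ K, x ^ 3 = 1) ∧ (∀ h ∈ H, h ≠ 1 → ∀ x ∈ K, h * x * h⁻¹ = x⁻¹) := by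
  obtain ⟨hKn, -, -, hcent⟩ := hfrob
  have notMem_K : ∀ t ∈ H, t ≠ 1 → t ∉ K := fun t ht ht1 htK =>
    ht1 (Subgroup.disjoint_def.mp hcompl.disjoint htK ht)
  have hinv : ∀ t ∈ H, t ≠ 1 → ∀ x ∈ K, t * x * t⁻¹ = x⁻¹ := fun t ht ht1 _ hx =>
    Subgroup.conj_eq_inv_of_fixedPointFree_conjNormal hcent (notMem_K t ht ht1)
      (sq_eq_one_of_mem_of_card_eq_two hH ht) hx
  refine ⟨fun x hx => ?_, hinv⟩
  obtain ⟨t, ht, ht1⟩ : ∃ t ∈ H, t ≠ 1 :=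
    (H.bot_or_exists_ne_one).resolve_left fun hbot => by simp [hbot] at hH
  have hodd : Odd (orderOf x) := Subgroup.odd_orderOf_of_fixedPointFree_conjNormal hcent
    (notMem_K t ht ht1) (sq_eq_one_of_mem_of_card_eq_two hH ht) hx
  exact pow_three_eq_one_of_isConj_sq (hrat x 2 (Nat.coprime_two_left.mpr hodd))
    (Subgroup.conj_eq_or_eq_inv_of_isComplement' hcompl hKab hinv hx)
end

section
/- Let G = E ⋊ ⟨x⟩ where E is an elementary abelian 3-group of order 3ⁿ with n ≥ 2 and x inverts every element of E. Then there exist two distinct non-linear irreducible characters of G with equal co-degrees; hence the map χ ↦ cod(χ) on Irr(G) is not injective. -/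
open CategoryTheory

/-!
Inducing a character `ψ` of `E` with `ψ² ≠ 1` to `G` gives the representation
`a ↦ diag(ψ a, (ψ a)⁻¹)`, `a x ↦ antidiag(ψ a, (ψ a)⁻¹)`. Its character is `ψ + ψ⁻¹` on `E` and
vanishes off `E`, so it has norm `1` and the representation is irreducible. Its kernel is `ker ψ`.
When `E` has exponent `3`, every nontrivial `ψ` satisfies `ψ² ≠ 1` and `|E : ker ψ| = 3`, so all
these characters have degree `2` and co-degree `2 · 3 / 2 = 3`. As `n ≥ 2`, two coordinate
functionals of `E ≅ (ℤ/3ℤ)ⁿ` give nontrivial characters `ψ, φ` and an element `v` with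
`ψ v ≠ 1 = φ v`, and the two induced characters differ at `v`.
-/

theorem add_inv_eq_two_iff {K : Type*} [Field K] {u : K} (hu : u ≠ 0) :
    u + u⁻¹ = 2 ↔ u = 1 := by
  refine ⟨fun h => ?_, fun h => by rw [h, inv_one, one_add_one_eq_two]⟩
  have h' : (u - 1) ^ 2 = 0 := by
    field_simp at h
    linear_combination h
  exact sub_eq_zero.mp (pow_eq_zero_iff two_ne_zero |>.mp h')

section Matrices

variable {K : Type*} [Field K]

def diagInvMatrix (u : K) : Matrix (Fin 2) (Fin 2) K := !![u, 0; 0, u⁻¹]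

def antidiagInvMatrix (u : K) : Matrix (Fin 2) (Fin 2) K := !![0, u; u⁻¹, 0]

theorem diagInvMatrix_one : diagInvMatrix (1 : K) = 1 := by
  simp [diagInvMatrix, Matrix.one_fin_two]

theorem diagInvMatrix_mul_diagInvMatrix (u v : K) :
    diagInvMatrix u * diagInvMatrix v = diagInvMatrix (u * v) := by
  simp [diagInvMatrix, mul_comm]

theorem diagInvMatrix_mul_antidiagInvMatrix (u v : K) :
    diagInvMatrix u * antidiagInvMatrix v = antidiagInvMatrix (u * v) := by
  simp [diagInvMatrix, antidiagInvMatrix, mul_comm]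

theorem antidiagInvMatrix_mul_diagInvMatrix (u v : K) :
    antidiagInvMatrix u * diagInvMatrix v = antidiagInvMatrix (u * v⁻¹) := by
  simp [diagInvMatrix, antidiagInvMatrix, mul_comm]

theorem antidiagInvMatrix_mul_antidiagInvMatrix (u v : K) :
    antidiagInvMatrix u * antidiagInvMatrix v = diagInvMatrix (u * v⁻¹) := by
  simp [diagInvMatrix, antidiagInvMatrix, mul_comm]

theorem diagInvMatrix_eq_one_iff {u : K} : diagInvMatrix u = 1 ↔ u = 1 := by
  refine ⟨fun h => by simpa [diagInvMatrix] using congrFun (congrFun h 0) 0, ?_⟩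
  rintro rfl
  exact diagInvMatrix_one

theorem antidiagInvMatrix_ne_one (u : K) : antidiagInvMatrix u ≠ 1 := fun h => by
  simpa [antidiagInvMatrix] using congrFun (congrFun h 0) 0

end Matrices

theorem MonoidHom.pow_two_ne_one {A M : Type*} [Group A] [CommMonoid M] {p : ℕ} (hp : Odd p)
    (hA : ∀ a : A, a ^ p = 1) {ψ : A →* M} (hψ : ψ ≠ 1) : ψ ^ 2 ≠ 1 := by
  contrapose! hψ
  ext a
  have h2 : ψ a ^ 2 = 1 := by rw [← MonoidHom.pow_apply, hψ, MonoidHom.one_apply]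
  have hp' : ψ a ^ p = 1 := by rw [← map_pow, hA, map_one]
  simpa [Nat.coprime_two_left.mpr hp] using pow_gcd_eq_one.mpr ⟨h2, hp'⟩

theorem MonoidHom.index_ker_eq_of_pow_eq_one {A R : Type*} [Group A] [CommRing R] [IsDomain R]
    {p : ℕ} [Fact p.Prime] (hA : ∀ a : A, a ^ p = 1) {ψ : A →* R} (hψ : ψ ≠ 1) :
    ψ.ker.index = p := by
  rw [← MonoidHom.ker_toHomUnits, Subgroup.index_ker]
  have hle : ψ.toHomUnits.range ≤ rootsOfUnity p R := by
    rintro _ ⟨a, rfl⟩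
    rw [mem_rootsOfUnity, ← map_pow, hA, map_one]
  obtain ⟨a, ha⟩ := DFunLike.ne_iff.mp hψ
  have hord : orderOf (ψ.toHomUnits a) = p :=
    orderOf_eq_prime (by rw [← map_pow, hA, map_one]) fun h =>
      ha (by simpa using congrArg Units.val h)
  have : Finite ψ.toHomUnits.range := Finite.of_injective _ (Subgroup.inclusion_injective hle)
  refine le_antisymm ((Subgroup.card_le_of_le hle).trans (card_rootsOfUnity R p)) ?_
  exact Nat.le_of_dvd Nat.card_pos (hord ▸ Subgroup.orderOf_dvd_natCard _ ⟨a, rfl⟩)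

theorem Module.exists_dual_pair_of_two_le_finrank {K V : Type*} [Field K] [AddCommGroup V]
    [Module K V] [Module.Finite K V] (h : 2 ≤ Module.finrank K V) :
    ∃ (f g : V →ₗ[K] K) (v w : V), f v ≠ 0 ∧ g v = 0 ∧ g w ≠ 0 := by
  let b := Module.finBasis K V
  let i : Fin (Module.finrank K V) := ⟨0, by omega⟩
  let j : Fin (Module.finrank K V) := ⟨1, by omega⟩
  have hij : i ≠ j := Fin.ne_of_val_ne zero_ne_one
  refine ⟨b.coord i, b.coord j, b i, b j, ?_, ?_, ?_⟩ <;> simp [hij]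

theorem AddChar.exists_pair_of_card_eq_pow {V : Type*} [AddCommGroup V] {p n : ℕ} [Fact p.Prime]
    [Module (ZMod p) V] [Finite V] (hcard : Nat.card V = p ^ n) (hn : 2 ≤ n) :
    ∃ (ψ φ : AddChar V ℂ) (v : V), ψ v ≠ 1 ∧ φ v = 1 ∧ φ ≠ 1 := by
  have : Module.Finite (ZMod p) V := Module.Finite.of_finite
  have hrank : Module.finrank (ZMod p) V = n := by
    have h := Module.natCard_eq_pow_finrank (K := ZMod p) (V := V)
    rw [Nat.card_zmod] at h
    exact Nat.pow_right_injective (Fact.out : p.Prime).two_le (h.symm.trans hcard)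
  obtain ⟨f, g, v, w, hfv, hgv, hgw⟩ := Module.exists_dual_pair_of_two_le_finrank (hrank ▸ hn)
  have hchar (f : V →ₗ[ZMod p] ZMod p) (a : V) :
      ZMod.stdAddChar.compAddMonoidHom f.toAddMonoidHom a = 1 ↔ f a = 0 := by
    rw [AddChar.compAddMonoidHom_apply, ← ZMod.injective_stdAddChar.eq_iff,
      AddChar.map_zero_eq_one]
    rfl
  exact ⟨_, _, v, (hchar f v).not.mpr hfv, (hchar g v).mpr hgv,
    fun h => hgw ((hchar g w).mp (by rw [h, AddChar.one_apply]))⟩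

theorem MonoidHom.exists_pair_of_card_eq_pow {A : Type*} [CommGroup A] [Finite A] {p n : ℕ}
    [Fact p.Prime] (hA : ∀ a : A, a ^ p = 1) (hcard : Nat.card A = p ^ n) (hn : 2 ≤ n) :
    ∃ (ψ φ : A →* ℂ) (v : A), ψ v ≠ 1 ∧ φ v = 1 ∧ φ ≠ 1 := by
  let _ : Module (ZMod p) (Additive A) := AddCommMonoid.zmodModule fun a => hA a.toMul
  obtain ⟨ψ, φ, v, hψv, hφv, hφ⟩ := AddChar.exists_pair_of_card_eq_pow (V := Additive A) hcard hn
  exact ⟨ψ.toMonoidHom, φ.toMonoidHom, v.toMul, hψv, hφv,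
    fun h => hφ (AddChar.toMonoidHomEquiv.injective h)⟩

structure IsGeneralizedDihedral {G : Type*} [Group G] (E : Subgroup G) (x : G) : Prop where
  index_eq_two : E.index = 2
  notMem : x ∉ E
  mul_self : x * x = 1
  conj_eq_inv : ∀ a ∈ E, x * a * x⁻¹ = a⁻¹

namespace IsGeneralizedDihedral

section

variable {G : Type*} [Group G] {E : Subgroup G} {x : G}

theorem of_isComplement' (hx : orderOf x = 2) (hinv : ∀ a ∈ E, x * a * x⁻¹ = a⁻¹)
    (hcompl : E.IsComplement' (Subgroup.zpowers x)) : IsGeneralizedDihedral E x where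
  index_eq_two := by rw [hcompl.symm.index_eq_card, Nat.card_zpowers, hx]
  notMem hxE := by
    have h1 : x = 1 := Subgroup.disjoint_def.mp hcompl.disjoint hxE (Subgroup.mem_zpowers x)
    simp [h1] at hx
  mul_self := by rw [← pow_two, ← hx, pow_orderOf_eq_one]
  conj_eq_inv := hinv

theorem mul_mem_of_notMem (hE : IsGeneralizedDihedral E x) {g : G} (hg : g ∉ E) :
    g * x ∈ E :=
  (Subgroup.mul_mem_iff_of_index_two hE.index_eq_two).mpr (iff_of_false hg hE.notMem)

theorem exists_eq_or_eq_mul (hE : IsGeneralizedDihedral E x) (g : G) :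
    ∃ a : E, g = a ∨ g = a * x := by
  by_cases hg : g ∈ E
  · exact ⟨⟨g, hg⟩, .inl rfl⟩
  · refine ⟨⟨g * x, hE.mul_mem_of_notMem hg⟩, .inr ?_⟩
    rw [mul_assoc, hE.mul_self, mul_one]

theorem coe_mul_mul_coe (hE : IsGeneralizedDihedral E x) (a b : E) :
    a * x * b = ↑(a * b⁻¹) * x := by
  have h := hE.conj_eq_inv b b.2
  rw [Subgroup.coe_mul, Subgroup.coe_inv, ← h]
  group

theorem coe_mul_mul_coe_mul (hE : IsGeneralizedDihedral E x) (a b : E) :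
    a * x * (b * x) = ↑(a * b⁻¹) := by
  rw [← mul_assoc, hE.coe_mul_mul_coe, mul_assoc, hE.mul_self, mul_one]

-- The matrix of `Ind_E^G ψ` in the basis `1 ⊗ 1, x ⊗ 1` of `ℂ[G] ⊗_{ℂ[E]} ℂ_ψ`.
open Classical in
noncomputable def inducedMatrix (hE : IsGeneralizedDihedral E x) (ψ : E →* ℂ) (g : G) :
    Matrix (Fin 2) (Fin 2) ℂ :=
  if h : g ∈ E then diagInvMatrix (ψ ⟨g, h⟩)
  else antidiagInvMatrix (ψ ⟨g * x, hE.mul_mem_of_notMem h⟩)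

theorem inducedMatrix_coe (hE : IsGeneralizedDihedral E x) (ψ : E →* ℂ) (a : E) :
    hE.inducedMatrix ψ a = diagInvMatrix (ψ a) := by
  simp [inducedMatrix]

theorem inducedMatrix_coe_mul (hE : IsGeneralizedDihedral E x) (ψ : E →* ℂ) (a : E) :
    hE.inducedMatrix ψ (a * x) = antidiagInvMatrix (ψ a) := by
  have ha : (a : G) * x ∉ E := fun h => hE.notMem (by simpa using mul_mem (inv_mem a.2) h)
  simp [inducedMatrix, ha, mul_assoc, hE.mul_self]

noncomputable def inducedMatrixHom (hE : IsGeneralizedDihedral E x) (ψ : E →* ℂ) :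
    G →* Matrix (Fin 2) (Fin 2) ℂ where
  toFun := hE.inducedMatrix ψ
  map_one' := by
    rw [← Subgroup.coe_one, inducedMatrix_coe, map_one, diagInvMatrix_one]
  map_mul' g h := by
    obtain ⟨a, rfl | rfl⟩ := hE.exists_eq_or_eq_mul g <;>
      obtain ⟨b, rfl | rfl⟩ := hE.exists_eq_or_eq_mul h
    · rw [← Subgroup.coe_mul, inducedMatrix_coe, inducedMatrix_coe, inducedMatrix_coe, map_mul,
        diagInvMatrix_mul_diagInvMatrix]
    · rw [← mul_assoc, ← Subgroup.coe_mul, inducedMatrix_coe_mul, inducedMatrix_coe,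
        inducedMatrix_coe_mul, map_mul, diagInvMatrix_mul_antidiagInvMatrix]
    · rw [hE.coe_mul_mul_coe, inducedMatrix_coe_mul, inducedMatrix_coe_mul, inducedMatrix_coe,
        map_mul, map_inv, antidiagInvMatrix_mul_diagInvMatrix]
    · rw [hE.coe_mul_mul_coe_mul, inducedMatrix_coe, inducedMatrix_coe_mul, inducedMatrix_coe_mul,
        map_mul, map_inv, antidiagInvMatrix_mul_antidiagInvMatrix]

end

variable {G : Type} [Group G] {E : Subgroup G} {x : G}

noncomputable def inducedFDRep (hE : IsGeneralizedDihedral E x) (ψ : E →* ℂ) : FDRep ℂ G :=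
  FDRep.of ((Matrix.toLinAlgEquiv' : Matrix (Fin 2) (Fin 2) ℂ ≃ₐ[ℂ] _).toAlgHom.toMonoidHom.comp
    (hE.inducedMatrixHom ψ))

theorem finrank_inducedFDRep (hE : IsGeneralizedDihedral E x) (ψ : E →* ℂ) :
    Module.finrank ℂ (hE.inducedFDRep ψ) = 2 :=
  Module.finrank_fin_fun ℂ

theorem character_inducedFDRep (hE : IsGeneralizedDihedral E x) (ψ : E →* ℂ) (g : G) :
    (hE.inducedFDRep ψ).character g = (hE.inducedMatrix ψ g).trace :=
  Matrix.trace_toLin'_eq _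

theorem character_inducedFDRep_coe (hE : IsGeneralizedDihedral E x) (ψ : E →* ℂ) (a : E) :
    (hE.inducedFDRep ψ).character a = ψ a + (ψ a)⁻¹ := by
  rw [character_inducedFDRep, inducedMatrix_coe, diagInvMatrix, Matrix.trace_fin_two_of]

theorem character_inducedFDRep_of_notMem (hE : IsGeneralizedDihedral E x) (ψ : E →* ℂ) {g : G}
    (hg : g ∉ E) : (hE.inducedFDRep ψ).character g = 0 := by
  rw [character_inducedFDRep, inducedMatrix, dif_neg hg, antidiagInvMatrix, Matrix.trace_fin_two_of,
    add_zero]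

theorem charKer_inducedFDRep (hE : IsGeneralizedDihedral E x) (ψ : E →* ℂ) :
    (hE.inducedFDRep ψ).charKer = ψ.ker.map E.subtype := by
  ext g
  have hρ : g ∈ (hE.inducedFDRep ψ).charKer ↔ hE.inducedMatrix ψ g = 1 := by
    rw [FDRep.charKer, MonoidHom.mem_ker, Units.ext_iff, Representation.asGroupHom_apply]
    exact map_eq_one_iff _ Matrix.toLinAlgEquiv'.injective
  obtain ⟨a, rfl | rfl⟩ := hE.exists_eq_or_eq_mul g
  · rw [hρ, inducedMatrix_coe, diagInvMatrix_eq_one_iff, ← Subgroup.coe_subtype,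
      Subgroup.mem_map_iff_mem E.subtype_injective, MonoidHom.mem_ker]
  · refine iff_of_false (hρ.not.mpr ?_) fun h => hE.notMem ?_
    · rw [inducedMatrix_coe_mul]
      exact antidiagInvMatrix_ne_one _
    · obtain ⟨b, -, hb⟩ := Subgroup.mem_map.mp h
      rw [Subgroup.coe_subtype] at hb
      simpa [hb] using mul_mem (inv_mem a.2) b.2

theorem cod_inducedFDRep (hE : IsGeneralizedDihedral E x) (ψ : E →* ℂ) :
    (hE.inducedFDRep ψ).cod = ψ.ker.index := by
  rw [FDRep.cod, charKer_inducedFDRep, Subgroup.index_map_subtype, hE.index_eq_two,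
    finrank_inducedFDRep, Nat.mul_div_cancel _ two_pos]

theorem simple_inducedFDRep [Fintype G] (hE : IsGeneralizedDihedral E x) (ψ : E →* ℂ)
    (hψ : ψ ^ 2 ≠ 1) : Simple (hE.inducedFDRep ψ) := by
  classical
  have hterm : ∀ a : E, (hE.inducedFDRep ψ).character a * (hE.inducedFDRep ψ).character (a : G)⁻¹
      = (ψ ^ 2) a + 2 + (ψ ^ 2) a⁻¹ := fun a => by
    have ha : ψ a ≠ 0 := ((Group.isUnit a).map ψ).ne_zero
    rw [← Subgroup.coe_inv, character_inducedFDRep_coe, character_inducedFDRep_coe,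
      MonoidHom.pow_apply, MonoidHom.pow_apply, map_inv]
    field_simp
    ring
  have hinv : ∑ a : E, (ψ ^ 2) a⁻¹ = 0 := by
    rw [Fintype.sum_equiv (Equiv.inv E) (fun a => (ψ ^ 2) a⁻¹) (fun a => (ψ ^ 2) a) fun _ => rfl,
      sum_hom_units_eq_zero _ hψ]
  have hout : ∑ g : {g // g ∉ E},
      (hE.inducedFDRep ψ).character g * (hE.inducedFDRep ψ).character (g : G)⁻¹ = 0 :=
    Finset.sum_eq_zero fun g _ => by rw [character_inducedFDRep_of_notMem hE ψ g.2, zero_mul]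
  rw [FDRep.simple_iff_char_is_norm_one, ← Fintype.sum_subtype_add_sum_subtype (· ∈ E), hout,
    add_zero, Finset.sum_congr rfl fun a _ => hterm a, Finset.sum_add_distrib,
    Finset.sum_add_distrib, sum_hom_units_eq_zero _ hψ, hinv, ← E.card_mul_index, hE.index_eq_two]
  simp

end IsGeneralizedDihedral

theorem not_codInjective_of_large_elementary_abelian_kernel_general {G : Type} [Group G] [Fintype G]
    (n : ℕ) (hn : 2 ≤ n) (E : Subgroup G) (x : G)
    (hE3 : ∀ a ∈ E, a ^ 3 = 1) (hEab : ∀ a ∈ E, ∀ b ∈ E, a * b = b * a)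
    (hcard : Nat.card E = 3 ^ n) (hx : orderOf x = 2)
    (hinv : ∀ a ∈ E, x * a * x⁻¹ = a⁻¹)
    (hcompl : Subgroup.IsComplement' E (Subgroup.zpowers x)) :
    (∃ V W : FDRep ℂ G, Simple V ∧ Simple W ∧ 1 < Module.finrank ℂ V ∧
      1 < Module.finrank ℂ W ∧ V.character ≠ W.character ∧ V.cod = W.cod) ∧
    ¬ codInjective G := by
  have hE := IsGeneralizedDihedral.of_isComplement' hx hinv hcompl
  have hE3' : ∀ a : E, a ^ 3 = 1 := fun a => Subtype.ext (hE3 a a.2)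
  have : Fact (Nat.Prime 3) := ⟨Nat.prime_three⟩
  let _ : CommGroup E := { mul_comm := fun a b => Subtype.ext (hEab a a.2 b b.2) }
  obtain ⟨ψ, φ, v, hψv, hφv, hφ⟩ := MonoidHom.exists_pair_of_card_eq_pow hE3' hcard hn
  have hψ : ψ ≠ 1 := fun h => hψv (by rw [h, MonoidHom.one_apply])
  have hsimple {χ : E →* ℂ} (hχ : χ ≠ 1) : Simple (hE.inducedFDRep χ) :=
    hE.simple_inducedFDRep χ (χ.pow_two_ne_one (by decide) hE3' hχ)
  have hdeg (χ : E →* ℂ) : 1 < Module.finrank ℂ (hE.inducedFDRep χ) := by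
    rw [hE.finrank_inducedFDRep]
    norm_num
  have hcod : (hE.inducedFDRep ψ).cod = (hE.inducedFDRep φ).cod := by
    rw [hE.cod_inducedFDRep, hE.cod_inducedFDRep, ψ.index_ker_eq_of_pow_eq_one hE3' hψ,
      φ.index_ker_eq_of_pow_eq_one hE3' hφ]
  have hchar : (hE.inducedFDRep ψ).character ≠ (hE.inducedFDRep φ).character := fun h => by
    have hv := congrFun h v
    rw [hE.character_inducedFDRep_coe, hE.character_inducedFDRep_coe, hφv, inv_one,
      one_add_one_eq_two, add_inv_eq_two_iff ((Group.isUnit v).map ψ).ne_zero] at hv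
    exact hψv hv
  exact ⟨⟨_, _, hsimple hψ, hsimple hφ, hdeg ψ, hdeg φ, hchar, hcod⟩,
    fun h => hchar (h _ _ (hsimple hψ) (hsimple hφ) hcod)⟩

theorem not_codInjective_of_large_elementary_abelian_kernel {G : Type} [Group G] [Fintype G]
    (n : ℕ) (hn : 2 ≤ n) (E : Subgroup G) [E.Normal] (x : G)
    (hE3 : ∀ a ∈ E, a ^ 3 = 1) (hEab : ∀ a ∈ E, ∀ b ∈ E, a * b = b * a)
    (hcard : Nat.card E = 3 ^ n) (hx : orderOf x = 2)
    (hinv : ∀ a ∈ E, x * a * x⁻¹ = a⁻¹)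
    (hcompl : Subgroup.IsComplement' E (Subgroup.zpowers x)) :
    (∃ V W : FDRep ℂ G, Simple V ∧ Simple W ∧ 1 < Module.finrank ℂ V ∧
      1 < Module.finrank ℂ W ∧ V.character ≠ W.character ∧ V.cod = W.cod) ∧
    ¬ codInjective G :=
  not_codInjective_of_large_elementary_abelian_kernel_general n hn E x hE3 hEab hcard hx hinv hcompl
end
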